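/- For every integer n ≥ 1 and real sequence where dim H⁰ grows like vol·mⁿ/n!: if vol > 0 is a real number and h : ℕ → ℕ satisfies h(m) ≥ vol·mⁿ/n! − o(mⁿ), and the number of conditions to impose multiplicity ≥ e at a point is at most (e+n−1)ⁿ/n!, then for every real t < vol^{1/n} and all sufficiently large m there exists a nonzero section vanishing to order ≥ ⌈t·m⌉; i.e., the maximal multiplicity μ_m satisfies liminf μ_m/m ≥ vol^{1/n}. -/

import Mathlib

open Filter

/-!
Choose `t < s < vol^{1/n}`, so that `s^n < vol`. For large `m` the error term is a small
fraction of `m^n`, hence `h m > (s m)^n / n!`; and `⌈t m⌉ + n - 1 ≤ s m` once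
`m ≥ n / (s - t)`.
The multiplicity hypothesis at `e = ⌈t m⌉` then gives `⌈t m⌉ ≤ μ m`.
-/

lemma pow_lt_of_lt_rpow_one_div {s x : ℝ} {n : ℕ} (hn : n ≠ 0) (hs : 0 ≤ s) (hx : 0 ≤ x)
    (hsx : s < x ^ ((1 : ℝ) / n)) : s ^ n < x := by
  rw [one_div, Real.lt_rpow_inv_iff_of_pos hs hx (by positivity), Real.rpow_natCast] at hsx
  exact hsx

lemma eventually_mul_pow_lt_sub_of_isLittleO {a b : ℝ} {n : ℕ} (hab : a < b) {err : ℕ → ℝ}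
    (herr : err =o[atTop] fun m : ℕ => (m : ℝ) ^ n) :
    ∀ᶠ m : ℕ in atTop, a * (m : ℝ) ^ n < b * (m : ℝ) ^ n - err m := by
  filter_upwards [herr.bound (half_pos (sub_pos.2 hab)), eventually_ge_atTop 1] with m hm hm1
  have hpos : (0 : ℝ) < (m : ℝ) ^ n := pow_pos (by exact_mod_cast hm1) n
  rw [Real.norm_eq_abs, Real.norm_of_nonneg hpos.le] at hm
  nlinarith [le_abs_self (err m)]

lemma eventually_ceil_mul_add_le_mul {t s : ℝ} (ht : 0 ≤ t) (hts : t < s) (c : ℝ) :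
    ∀ᶠ m : ℕ in atTop, (⌈t * (m : ℝ)⌉₊ : ℝ) + c ≤ s * m := by
  filter_upwards [tendsto_natCast_atTop_atTop.eventually_ge_atTop ((1 + c) / (s - t))] with m hm
  have hceil := Nat.ceil_lt_add_one (mul_nonneg ht (Nat.cast_nonneg m))
  rw [div_le_iff₀ (sub_pos.2 hts)] at hm
  linarith

/-- Abstract form of `μ(L;x) ≥ vol^{1/n}(L)`. If `h m ≥ vol·m^n/n! − o(m^n)`
and a section of multiplicity `≥ e` exists (i.e. `e ≤ μ m`) whenever
`h m > (e+n−1)^n/n!`, then for every `t < vol^{1/n}` and all sufficiently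
large `m` the maximal multiplicity satisfies `μ m ≥ ⌈t·m⌉`. -/
theorem stmt_7 (n : ℕ) (hn : 1 ≤ n) (vol : ℝ) (hvol : 0 < vol)
    (h : ℕ → ℕ) (μ : ℕ → ℕ)
    (err : ℕ → ℝ)
    (herr : err =o[atTop] fun m : ℕ => (m : ℝ) ^ n)
    (hlow : ∀ m : ℕ, vol * (m : ℝ) ^ n / (n.factorial : ℝ) - err m ≤ (h m : ℝ))
    (hmult : ∀ m e : ℕ,
      ((e : ℝ) + n - 1) ^ n / (n.factorial : ℝ) < (h m : ℝ) → e ≤ μ m) :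
    ∀ t : ℝ, 0 ≤ t → t < vol ^ ((1 : ℝ) / n) →
      ∀ᶠ m : ℕ in atTop, ⌈t * (m : ℝ)⌉₊ ≤ μ m := by
  intro t ht htv
  obtain ⟨s, hts, hsv⟩ := exists_between htv
  have hs : 0 ≤ s := ht.trans hts.le
  have hsn : s ^ n < vol := pow_lt_of_lt_rpow_one_div (by omega) hs hvol.le hsv
  have hfac : (0 : ℝ) < n.factorial := by exact_mod_cast n.factorial_pos
  have hn' : (1 : ℝ) ≤ n := by exact_mod_cast hn
  filter_upwards [eventually_ceil_mul_add_le_mul ht hts (n - 1),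
    eventually_mul_pow_lt_sub_of_isLittleO (div_lt_div_of_pos_right hsn hfac) herr]
    with m hceil hvolm
  apply hmult
  calc ((⌈t * (m : ℝ)⌉₊ : ℝ) + n - 1) ^ n / n.factorial
      ≤ (s * m) ^ n / n.factorial := by
        gcongr
        · linarith [(Nat.cast_nonneg _ : (0 : ℝ) ≤ ⌈t * (m : ℝ)⌉₊)]
        · linarith
    _ = s ^ n / n.factorial * (m : ℝ) ^ n := by ring
    _ < vol / n.factorial * (m : ℝ) ^ n - err m := hvolm
    _ = vol * (m : ℝ) ^ n / n.factorial - err m := by ring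
    _ ≤ h m := hlow m
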